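/- arXiv:1607.08312 — 2 statements merged into one kernel-verified Lean document; each statement's English description precedes it below -/
import Mathlib

section
/- Let G be a graph with no induced K_{1,3}, H1, or H2, and let v be any vertex with maximum clique Q_v in N(v). Then exactly one of the following holds: (1) N(v) \ Q_v induces a complete graph; (2) N(v) \ Q_v = {w, z} with wz ∉ E(G), and there exist w', z' ∈ Q_v with ww', zz' ∉ E(G), w adjacent to all of Q_v \ {w'}, and z adjacent to all of Q_v \ {z'}; (3) N(v) \ Q_v = {w, z, x} with xz, xw ∈ E(G), wz ∉ E(G), and there exist w', z' ∈ Q_v with ww', zz', xw', xz' ∉ E(G), w adjacent to all of Q_v \ {w'}, z adjacent to all of Q_v \ {z'}, and x adjacent to all of Q_v \ {w', z'}. -/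
/-!
Maximality of `Q` forbids a clique `S ⊆ N(v) \ Q` adjacent to all of `Q` except a set `T`
with `|T| < |S|`: `S ∪ (Q \ T)` would be a larger clique. If `N(v) \ Q` is not a
clique, pick nonadjacent `w, z` in it. Claw-freeness makes every vertex of `N(v)` adjacent to
`w` or `z`, and an `H1` shows that `w` and `z` each miss exactly one vertex `w'`, resp. `z'`, of
`Q`, with `w' ≠ z'`. Any further vertex `x` of `N(v) \ Q` is then adjacent to `w` and `z`
(by `H1` and maximality), misses `w'` and `z'` (by `H2` and maximality) and sees the rest of
`Q` (by `H1`). Two such vertices would either form a too large clique with `w`, or one of them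
would miss both `w'` and `z'` against a nonadjacent partner. The three cases are exclusive
because in cases 2 and 3 the set `N(v) \ Q` contains a nonadjacent pair and has two, resp.
three, elements.
-/

open SimpleGraph

def claw : SimpleGraph (Fin 1 ⊕ Fin 3) := completeBipartiteGraph (Fin 1) (Fin 3)

/-- `H1`: the path a-b-c-d-e together with chords ac and bd. -/
def H1 : SimpleGraph (Fin 5) :=
  fromEdgeSet {s(0, 1), s(1, 2), s(2, 3), s(3, 4), s(0, 2), s(1, 3)}

/-- `H2`: the 5-cycle a-b-c-d-e-a together with chords ac and bd. -/
def H2 : SimpleGraph (Fin 5) :=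
  fromEdgeSet {s(0, 1), s(1, 2), s(2, 3), s(3, 4), s(4, 0), s(0, 2), s(1, 3)}

def IsMaxCliqueInNbhd {V : Type*} (G : SimpleGraph V) (v : V) (Q : Finset V) : Prop :=
  ↑Q ⊆ G.neighborSet v ∧ G.IsClique ↑Q ∧
    ∀ R : Finset V, ↑R ⊆ G.neighborSet v → G.IsClique ↑R → R.card ≤ Q.card

variable {V : Type*} (G : SimpleGraph V) (v : V) (Q : Finset V)

/-- Case 1: `N(v) \ Q` induces a complete graph. -/
def Case1 : Prop := G.IsClique (G.neighborSet v \ ↑Q)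

/-- Case 2: `N(v) \ Q = {w, z}` with `wz ∉ E(G)`, and suitable `w', z' ∈ Q`. -/
def Case2 : Prop :=
  ∃ w z : V, w ≠ z ∧ G.neighborSet v \ ↑Q = {w, z} ∧ ¬ G.Adj w z ∧
    ∃ w' ∈ Q, ∃ z' ∈ Q, ¬ G.Adj w w' ∧ ¬ G.Adj z z' ∧
      (∀ q ∈ Q, q ≠ w' → G.Adj w q) ∧ (∀ q ∈ Q, q ≠ z' → G.Adj z q)

/-- Case 3: `N(v) \ Q = {w, z, x}` with `xz, xw ∈ E(G)`, `wz ∉ E(G)`,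
and suitable `w', z' ∈ Q`. -/
def Case3 : Prop :=
  ∃ w z x : V, w ≠ z ∧ w ≠ x ∧ z ≠ x ∧ G.neighborSet v \ ↑Q = {w, z, x} ∧
    G.Adj x z ∧ G.Adj x w ∧ ¬ G.Adj w z ∧
    ∃ w' ∈ Q, ∃ z' ∈ Q, ¬ G.Adj w w' ∧ ¬ G.Adj z z' ∧ ¬ G.Adj x w' ∧ ¬ G.Adj x z' ∧
      (∀ q ∈ Q, q ≠ w' → G.Adj w q) ∧ (∀ q ∈ Q, q ≠ z' → G.Adj z q) ∧
      (∀ q ∈ Q, q ≠ w' → q ≠ z' → G.Adj x q)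

section InducedSubgraphs

variable {G}

lemma nonempty_claw_embedding {c a b d : V} (hab : a ≠ b) (had : a ≠ d) (hbd : b ≠ d)
    (hca : G.Adj c a) (hcb : G.Adj c b) (hcd : G.Adj c d)
    (nab : ¬ G.Adj a b) (nad : ¬ G.Adj a d) (nbd : ¬ G.Adj b d) :
    Nonempty (claw ↪g G) := by
  have := hca.ne; have := hcb.ne; have := hcd.ne
  refine ⟨⟨⟨Sum.elim (fun _ => c) ![a, b, d], ?_⟩, ?_⟩⟩
  · rintro (x | x) (y | y) h <;> fin_cases x <;> fin_cases y <;> simp_all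
  · intro x y
    change G.Adj (Sum.elim (fun _ => c) ![a, b, d] x) (Sum.elim (fun _ => c) ![a, b, d] y) ↔
      claw.Adj x y
    rcases x with x | x <;> rcases y with y | y <;> fin_cases x <;> fin_cases y <;>
      simp_all [claw, G.adj_comm]

lemma nonempty_H1_embedding {a b c d e : V} (had : a ≠ d) (hae : a ≠ e) (hbe : b ≠ e)
    (hce : c ≠ e) (hab : G.Adj a b) (hbc : G.Adj b c) (hcd : G.Adj c d) (hde : G.Adj d e)
    (hac : G.Adj a c) (hbd : G.Adj b d)
    (nad : ¬ G.Adj a d) (nae : ¬ G.Adj a e) (nbe : ¬ G.Adj b e) (nce : ¬ G.Adj c e) :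
    Nonempty (H1 ↪g G) := by
  have := hab.ne; have := hbc.ne; have := hcd.ne; have := hde.ne
  have := hac.ne; have := hbd.ne
  refine ⟨⟨⟨![a, b, c, d, e], ?_⟩, ?_⟩⟩
  · intro x y h
    fin_cases x <;> fin_cases y <;> simp_all
  · intro x y
    change G.Adj (![a, b, c, d, e] x) (![a, b, c, d, e] y) ↔ H1.Adj x y
    fin_cases x <;> fin_cases y <;> simp_all [H1, G.adj_comm]

lemma nonempty_H2_embedding {a b c d e : V} (had : a ≠ d) (hbe : b ≠ e) (hce : c ≠ e)
    (hab : G.Adj a b) (hbc : G.Adj b c) (hcd : G.Adj c d) (hde : G.Adj d e)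
    (hea : G.Adj e a) (hac : G.Adj a c) (hbd : G.Adj b d)
    (nad : ¬ G.Adj a d) (nbe : ¬ G.Adj b e) (nce : ¬ G.Adj c e) :
    Nonempty (H2 ↪g G) := by
  have := hab.ne; have := hbc.ne; have := hcd.ne; have := hde.ne
  have := hac.ne; have := hbd.ne; have := hea.ne
  refine ⟨⟨⟨![a, b, c, d, e], ?_⟩, ?_⟩⟩
  · intro x y h
    fin_cases x <;> fin_cases y <;> simp_all
  · intro x y
    change G.Adj (![a, b, c, d, e] x) (![a, b, c, d, e] y) ↔ H2.Adj x y
    fin_cases x <;> fin_cases y <;> simp_all [H2, G.adj_comm]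

lemma adj_or_adj_of_clawFree (hclaw : ¬ Nonempty (claw ↪g G)) {v w z q : V}
    (hvw : G.Adj v w) (hvz : G.Adj v z) (hvq : G.Adj v q)
    (hwz : w ≠ z) (hwq : w ≠ q) (hzq : z ≠ q) (nwz : ¬ G.Adj w z) :
    G.Adj w q ∨ G.Adj z q := by
  by_contra! h
  exact hclaw (nonempty_claw_embedding hwz hwq hzq hvw hvz hvq nwz h.1 h.2)

end InducedSubgraphs

def IsOnlyNonNeighborIn (w w' : V) : Prop :=
  w' ∈ Q ∧ ¬ G.Adj w w' ∧ ∀ q ∈ Q, q ≠ w' → G.Adj w q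

lemma ne_of_mem_diff_coe {α : Type*} {s : Set α} {t : Finset α} {a b : α} (ha : a ∈ s \ ↑t)
    (hb : b ∈ t) : a ≠ b :=
  fun h => ha.2 (h ▸ hb)

namespace IsMaxCliqueInNbhd

variable {G v Q}

lemma adj (hQ : IsMaxCliqueInNbhd G v Q) {a b : V} (ha : a ∈ Q) (hb : b ∈ Q) (hab : a ≠ b) :
    G.Adj a b :=
  hQ.2.1 ha hb hab

lemma card_le_of_forall_adj (hQ : IsMaxCliqueInNbhd G v Q) {S : Finset V} (T : Finset V)
    (hS : ↑S ⊆ G.neighborSet v \ ↑Q) (hSc : G.IsClique ↑S)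
    (hST : ∀ s ∈ S, ∀ q ∈ Q, q ∉ T → G.Adj s q) : S.card ≤ T.card := by
  classical
  have hdisj : Disjoint S (Q \ T) :=
    Finset.disjoint_left.mpr fun s hs hsQ => (hS hs).2 (Finset.mem_sdiff.mp hsQ).1
  have hsub : ↑(S ∪ (Q \ T)) ⊆ G.neighborSet v := by
    rw [Finset.coe_union]
    exact Set.union_subset (hS.trans Set.sdiff_subset)
      ((Finset.coe_subset.mpr Finset.sdiff_subset).trans hQ.1)
  have hcl : G.IsClique ↑(S ∪ (Q \ T)) := by
    rw [Finset.coe_union, IsClique, Set.pairwise_union]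
    refine ⟨hSc, hQ.2.1.subset (Finset.coe_subset.mpr Finset.sdiff_subset), ?_⟩
    intro s hs q hq _
    have hsq := hST s hs q (Finset.mem_sdiff.mp hq).1 (Finset.mem_sdiff.mp hq).2
    exact ⟨hsq, hsq.symm⟩
  have hle := hQ.2.2 _ hsub hcl
  rw [Finset.card_union_of_disjoint hdisj] at hle
  have := Finset.le_card_sdiff T Q
  omega

lemma exists_not_adj (hQ : IsMaxCliqueInNbhd G v Q) {w : V}
    (hw : w ∈ G.neighborSet v \ ↑Q) : ∃ w' ∈ Q, ¬ G.Adj w w' := by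
  by_contra! h
  have := hQ.card_le_of_forall_adj ∅ (S := {w}) (by simpa using hw)
    (by simp) (by simpa using h)
  simp at this

/-- Two misses `w'`, `q` of `w` and a miss `z'` of `z` would span an `H1` on `z, w', q, z', w`. -/
lemma exists_isOnlyNonNeighborIn (hclaw : ¬ Nonempty (claw ↪g G))
    (h1 : ¬ Nonempty (H1 ↪g G)) (hQ : IsMaxCliqueInNbhd G v Q) {w z : V}
    (hw : w ∈ G.neighborSet v \ ↑Q) (hz : z ∈ G.neighborSet v \ ↑Q) (hwz : w ≠ z)
    (nwz : ¬ G.Adj w z) : ∃ w', IsOnlyNonNeighborIn G Q w w' := by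
  obtain ⟨w', hw'Q, nww'⟩ := hQ.exists_not_adj hw
  refine ⟨w', hw'Q, nww', fun q hq hqw' => ?_⟩
  by_contra nwq
  obtain ⟨z', hz'Q, nzz'⟩ := hQ.exists_not_adj hz
  have hzdom : ∀ p ∈ Q, ¬ G.Adj w p → G.Adj z p := fun p hp np =>
    (adj_or_adj_of_clawFree hclaw hw.1 hz.1 (hQ.1 hp) hwz (ne_of_mem_diff_coe hw hp)
      (ne_of_mem_diff_coe hz hp) nwz).resolve_left np
  have hwz' : G.Adj w z' :=
    (adj_or_adj_of_clawFree hclaw hz.1 hw.1 (hQ.1 hz'Q) hwz.symm (ne_of_mem_diff_coe hz hz'Q)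
      (ne_of_mem_diff_coe hw hz'Q) (fun h => nwz h.symm)).resolve_left nzz'
  have hz'w' : z' ≠ w' := by rintro rfl; exact nww' hwz'
  have hz'q : z' ≠ q := by rintro rfl; exact nwq hwz'
  exact h1 (nonempty_H1_embedding (ne_of_mem_diff_coe hz hz'Q) hwz.symm
    (ne_of_mem_diff_coe hw hw'Q).symm (ne_of_mem_diff_coe hw hq).symm (hzdom w' hw'Q nww')
    (hQ.adj hw'Q hq hqw'.symm) (hQ.adj hq hz'Q hz'q.symm) hwz'.symm (hzdom q hq nwq)
    (hQ.adj hw'Q hz'Q hz'w'.symm)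
    nzz' (fun h => nwz h.symm) (fun h => nww' h.symm) (fun h => nwq h.symm))

end IsMaxCliqueInNbhd

structure NonAdjPair (w z w' z' : V) : Prop where
  mem_left : w ∈ G.neighborSet v \ ↑Q
  mem_right : z ∈ G.neighborSet v \ ↑Q
  ne : w ≠ z
  not_adj : ¬ G.Adj w z
  left : IsOnlyNonNeighborIn G Q w w'
  right : IsOnlyNonNeighborIn G Q z z'
  ne' : w' ≠ z'

namespace NonAdjPair

variable {G v Q} {w z w' z' x : V}

lemma symm (P : NonAdjPair G v Q w z w' z') : NonAdjPair G v Q z w z' w' :=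
  ⟨P.mem_right, P.mem_left, P.ne.symm, fun h => P.not_adj h.symm, P.right, P.left, P.ne'.symm⟩

lemma of_not_adj (hclaw : ¬ Nonempty (claw ↪g G)) (h1 : ¬ Nonempty (H1 ↪g G))
    (hQ : IsMaxCliqueInNbhd G v Q) (hw : w ∈ G.neighborSet v \ ↑Q)
    (hz : z ∈ G.neighborSet v \ ↑Q) (hwz : w ≠ z) (nwz : ¬ G.Adj w z) :
    ∃ w' z', NonAdjPair G v Q w z w' z' := by
  obtain ⟨w', hw'⟩ := hQ.exists_isOnlyNonNeighborIn hclaw h1 hw hz hwz nwz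
  obtain ⟨z', hz'⟩ := hQ.exists_isOnlyNonNeighborIn hclaw h1 hz hw hwz.symm
    (fun h => nwz h.symm)
  refine ⟨w', z', hw, hz, hwz, nwz, hw', hz', ?_⟩
  rintro rfl
  have := adj_or_adj_of_clawFree hclaw hw.1 hz.1 (hQ.1 hw'.1) hwz
    (ne_of_mem_diff_coe hw hw'.1) (ne_of_mem_diff_coe hz hw'.1) nwz
  exact this.elim hw'.2.1 hz'.2.1

lemma exists_not_adj_of_adj_right (hQ : IsMaxCliqueInNbhd G v Q)
    (P : NonAdjPair G v Q w z w' z') (hx : x ∈ G.neighborSet v \ ↑Q) (hxz : G.Adj x z) :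
    ∃ q ∈ Q, q ≠ z' ∧ ¬ G.Adj x q := by
  classical
  by_contra! hxall
  have := hQ.card_le_of_forall_adj {z'} (S := {x, z})
    (by simpa [Set.insert_subset_iff] using ⟨hx, P.mem_right⟩)
    (by rw [Finset.coe_pair]; exact isClique_pair.mpr fun _ => hxz)
    (by simpa using ⟨hxall, P.right.2.2⟩)
  simp [Finset.card_pair hxz.ne] at this

/-- Otherwise either `{x, z}` is a clique seeing `Q \ {z'}`, or there is an `H1` on
`x, z, w', x', w`, where `x'` is the miss of `x`. -/
lemma adj_left_of_adj_right (hclaw : ¬ Nonempty (claw ↪g G)) (h1 : ¬ Nonempty (H1 ↪g G))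
    (hQ : IsMaxCliqueInNbhd G v Q) (P : NonAdjPair G v Q w z w' z')
    (hx : x ∈ G.neighborSet v \ ↑Q) (hxw : x ≠ w) (hxz : G.Adj x z) : G.Adj x w := by
  by_contra nxw
  obtain ⟨x', hx'Q, nxx', hxall⟩ :=
    hQ.exists_isOnlyNonNeighborIn hclaw h1 hx P.mem_left hxw nxw
  obtain ⟨hw'Q, nww', hwall⟩ := P.left
  obtain ⟨-, -, hzall⟩ := P.right
  have hxw' : G.Adj x w' :=
    (adj_or_adj_of_clawFree hclaw P.mem_left.1 hx.1 (hQ.1 hw'Q) hxw.symm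
      (ne_of_mem_diff_coe P.mem_left hw'Q) (ne_of_mem_diff_coe hx hw'Q)
      (fun h => nxw h.symm)).resolve_left nww'
  have hw'x' : w' ≠ x' := by rintro rfl; exact nxx' hxw'
  have hx'z' : x' ≠ z' := by
    rintro rfl
    obtain ⟨m, hm, hmx', nxm⟩ := P.exists_not_adj_of_adj_right hQ hx hxz
    exact nxm (hxall m hm hmx')
  exact h1 (nonempty_H1_embedding (ne_of_mem_diff_coe hx hx'Q) hxw P.ne.symm
    (ne_of_mem_diff_coe P.mem_left hw'Q).symm hxz (hzall w' hw'Q P.ne')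
    (hQ.adj hw'Q hx'Q hw'x') (hwall x' hx'Q hw'x'.symm).symm hxw' (hzall x' hx'Q hx'z')
    nxx' nxw (fun h => P.not_adj h.symm) (fun h => nww' h.symm))

lemma adj_left_and_adj_right (hclaw : ¬ Nonempty (claw ↪g G)) (h1 : ¬ Nonempty (H1 ↪g G))
    (hQ : IsMaxCliqueInNbhd G v Q) (P : NonAdjPair G v Q w z w' z')
    (hx : x ∈ G.neighborSet v \ ↑Q) (hxw : x ≠ w) (hxz : x ≠ z) :
    G.Adj x w ∧ G.Adj x z := by
  rcases adj_or_adj_of_clawFree hclaw P.mem_left.1 P.mem_right.1 hx.1 P.ne hxw.symm hxz.symm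
    P.not_adj with h | h
  · exact ⟨h.symm, P.symm.adj_left_of_adj_right hclaw h1 hQ hx hxz h.symm⟩
  · exact ⟨P.adj_left_of_adj_right hclaw h1 hQ hx hxw h.symm, h.symm⟩

/-- If `x` saw `w'` as well, it would see all of `Q \ {z'}` (a miss `m` would give an `H2` on
`x, w', z, m, w`), and `{x, z}` would contradict the maximality of `Q`. -/
lemma not_adj_left_miss (h2 : ¬ Nonempty (H2 ↪g G)) (hQ : IsMaxCliqueInNbhd G v Q)
    (P : NonAdjPair G v Q w z w' z') (hx : x ∈ G.neighborSet v \ ↑Q)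
    (hxw : G.Adj x w) (hxz : G.Adj x z) : ¬ G.Adj x w' := by
  intro hxw'
  obtain ⟨m, hm, hmz', nxm⟩ := P.exists_not_adj_of_adj_right hQ hx hxz
  obtain ⟨hw'Q, nww', hwall⟩ := P.left
  obtain ⟨-, -, hzall⟩ := P.right
  have hmw' : m ≠ w' := by rintro rfl; exact nxm hxw'
  exact h2 (nonempty_H2_embedding (ne_of_mem_diff_coe hx hm)
    (ne_of_mem_diff_coe P.mem_left hw'Q).symm P.ne.symm hxw' (hzall w' hw'Q P.ne').symm
    (hzall m hm hmz') (hwall m hm hmw').symm hxw.symm hxz (hQ.adj hw'Q hm hmw'.symm)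
    nxm (fun h => nww' h.symm) (fun h => P.not_adj h.symm))

lemma adj_of_ne_of_ne (h1 : ¬ Nonempty (H1 ↪g G)) (hQ : IsMaxCliqueInNbhd G v Q)
    (P : NonAdjPair G v Q w z w' z') (hx : x ∈ G.neighborSet v \ ↑Q)
    (hxw : G.Adj x w) (nxw' : ¬ G.Adj x w') (nxz' : ¬ G.Adj x z')
    {m : V} (hm : m ∈ Q) (hmw' : m ≠ w') (hmz' : m ≠ z') : G.Adj x m := by
  by_contra nxm
  obtain ⟨hw'Q, nww', hwall⟩ := P.left
  have hz'Q := P.right.1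
  exact h1 (nonempty_H1_embedding (ne_of_mem_diff_coe P.mem_left hw'Q).symm
    (ne_of_mem_diff_coe hx hw'Q).symm (ne_of_mem_diff_coe hx hm).symm
    (ne_of_mem_diff_coe hx hz'Q).symm (hQ.adj hw'Q hm hmw'.symm) (hQ.adj hm hz'Q hmz')
    (hwall z' hz'Q P.ne'.symm).symm hxw.symm (hQ.adj hw'Q hz'Q P.ne') (hwall m hm hmw').symm
    (fun h => nww' h.symm) (fun h => nxw' h.symm) (fun h => nxm h.symm)
    (fun h => nxz' h.symm))

lemma third_vertex_spec (hclaw : ¬ Nonempty (claw ↪g G)) (h1 : ¬ Nonempty (H1 ↪g G))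
    (h2 : ¬ Nonempty (H2 ↪g G)) (hQ : IsMaxCliqueInNbhd G v Q)
    (P : NonAdjPair G v Q w z w' z') (hx : x ∈ G.neighborSet v \ ↑Q) (hxw : x ≠ w)
    (hxz : x ≠ z) :
    G.Adj x w ∧ G.Adj x z ∧ ¬ G.Adj x w' ∧ ¬ G.Adj x z' ∧
      ∀ q ∈ Q, q ≠ w' → q ≠ z' → G.Adj x q := by
  obtain ⟨exw, exz⟩ := P.adj_left_and_adj_right hclaw h1 hQ hx hxw hxz
  have nxw' := P.not_adj_left_miss h2 hQ hx exw exz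
  have nxz' := P.symm.not_adj_left_miss h2 hQ hx exz exw
  exact ⟨exw, exz, nxw', nxz', fun q hq => P.adj_of_ne_of_ne h1 hQ hx exw nxw' nxz' hq⟩

/-- Two distinct third vertices `x, y` either form with `w` a clique seeing `Q \ {w', z'}`,
or are nonadjacent, and then `x` may miss only one vertex of `Q`, not both `w'` and `z'`. -/
lemma eq_of_ne_of_ne (hclaw : ¬ Nonempty (claw ↪g G)) (h1 : ¬ Nonempty (H1 ↪g G))
    (h2 : ¬ Nonempty (H2 ↪g G)) (hQ : IsMaxCliqueInNbhd G v Q)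
    (P : NonAdjPair G v Q w z w' z') {y : V}
    (hx : x ∈ G.neighborSet v \ ↑Q) (hxw : x ≠ w) (hxz : x ≠ z)
    (hy : y ∈ G.neighborSet v \ ↑Q) (hyw : y ≠ w) (hyz : y ≠ z) : x = y := by
  classical
  by_contra hxy
  obtain ⟨exw, -, nxw', nxz', hxall⟩ := P.third_vertex_spec hclaw h1 h2 hQ hx hxw hxz
  obtain ⟨eyw, -, -, -, hyall⟩ := P.third_vertex_spec hclaw h1 h2 hQ hy hyw hyz
  by_cases exy : G.Adj x y
  · have := hQ.card_le_of_forall_adj {w', z'} (S := {x, y, w})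
      (by simpa [Set.insert_subset_iff] using ⟨hx, hy, P.mem_left⟩)
      (by
        rw [Finset.coe_insert, Finset.coe_pair, isClique_insert, isClique_pair]
        simp [exy, exw, eyw])
      (by
        simp only [Finset.mem_insert, Finset.mem_singleton, not_or]
        rintro s (rfl | rfl | rfl) q hq ⟨hqw', hqz'⟩
        exacts [hxall q hq hqw' hqz', hyall q hq hqw' hqz', P.left.2.2 q hq hqw'])
    rw [Finset.card_insert_of_notMem (by simp [hxy, hxw]), Finset.card_pair hyw] at this
    have := Finset.card_le_two (a := w') (b := z')
    omega
  · obtain ⟨x', -, -, hxall'⟩ := hQ.exists_isOnlyNonNeighborIn hclaw h1 hx hy hxy exy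
    have hw'x' : w' = x' := by_contra fun h => nxw' (hxall' w' P.left.1 h)
    have hz'x' : z' = x' := by_contra fun h => nxz' (hxall' z' P.right.1 h)
    exact P.ne' (hw'x'.trans hz'x'.symm)

lemma case2 (P : NonAdjPair G v Q w z w' z')
    (h : ∀ y ∈ G.neighborSet v \ ↑Q, y = w ∨ y = z) : Case2 G v Q := by
  obtain ⟨hw'Q, nww', hwall⟩ := P.left
  obtain ⟨hz'Q, nzz', hzall⟩ := P.right
  refine ⟨w, z, P.ne, ?_, P.not_adj, w', hw'Q, z', hz'Q, nww', nzz', hwall, hzall⟩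
  exact Set.Subset.antisymm h
    (Set.insert_subset_iff.mpr ⟨P.mem_left, Set.singleton_subset_iff.mpr P.mem_right⟩)

lemma case3 (hclaw : ¬ Nonempty (claw ↪g G)) (h1 : ¬ Nonempty (H1 ↪g G))
    (h2 : ¬ Nonempty (H2 ↪g G)) (hQ : IsMaxCliqueInNbhd G v Q)
    (P : NonAdjPair G v Q w z w' z') (hx : x ∈ G.neighborSet v \ ↑Q) (hxw : x ≠ w)
    (hxz : x ≠ z) : Case3 G v Q := by
  obtain ⟨hw'Q, nww', hwall⟩ := P.left
  obtain ⟨hz'Q, nzz', hzall⟩ := P.right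
  obtain ⟨exw, exz, nxw', nxz', hxall⟩ := P.third_vertex_spec hclaw h1 h2 hQ hx hxw hxz
  refine ⟨w, z, x, P.ne, hxw.symm, hxz.symm, ?_, exz, exw, P.not_adj, w', hw'Q, z', hz'Q,
    nww', nzz', nxw', nxz', hwall, hzall, hxall⟩
  refine Set.Subset.antisymm (fun y hy => ?_) ?_
  · by_contra! hyne
    simp only [Set.mem_insert_iff, Set.mem_singleton_iff, not_or] at hyne
    exact hyne.2.2 (P.eq_of_ne_of_ne hclaw h1 h2 hQ hy hyne.1 hyne.2.1 hx hxw hxz)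
  · simp [Set.insert_subset_iff, P.mem_left, P.mem_right, hx]

end NonAdjPair

section Cases

variable {G v Q}

lemma case1_or_case2_or_case3 (hclaw : ¬ Nonempty (claw ↪g G)) (h1 : ¬ Nonempty (H1 ↪g G))
    (h2 : ¬ Nonempty (H2 ↪g G)) (hQ : IsMaxCliqueInNbhd G v Q) :
    Case1 G v Q ∨ Case2 G v Q ∨ Case3 G v Q := by
  by_cases hC : Case1 G v Q
  · exact Or.inl hC
  rw [Case1, IsClique, Set.Pairwise] at hC
  push Not at hC
  obtain ⟨w, hw, z, hz, hwz, nwz⟩ := hC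
  obtain ⟨w', z', P⟩ := NonAdjPair.of_not_adj hclaw h1 hQ hw hz hwz nwz
  by_cases hx : ∃ x ∈ G.neighborSet v \ ↑Q, x ≠ w ∧ x ≠ z
  · obtain ⟨x, hx, hxw, hxz⟩ := hx
    exact Or.inr (Or.inr (P.case3 hclaw h1 h2 hQ hx hxw hxz))
  · push Not at hx
    exact Or.inr (Or.inl (P.case2 fun y hy => or_iff_not_imp_left.mpr (hx y hy)))

lemma Case2.not_case1 (h : Case2 G v Q) : ¬ Case1 G v Q := by
  obtain ⟨w, z, hwz, hS, nwz, -⟩ := h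
  exact fun hC => nwz (hC (by simp [hS]) (by simp [hS]) hwz)

lemma Case3.not_case1 (h : Case3 G v Q) : ¬ Case1 G v Q := by
  obtain ⟨w, z, x, hwz, -, -, hS, -, -, nwz, -⟩ := h
  exact fun hC => nwz (hC (by simp [hS]) (by simp [hS]) hwz)

lemma Case3.not_case2 (h : Case3 G v Q) : ¬ Case2 G v Q := by
  rintro ⟨w, z, hwz, hS, -⟩
  obtain ⟨a, b, c, hab, hac, hbc, hS', -⟩ := h
  have := Set.ncard_pair hwz
  rw [← hS, hS', Set.ncard_eq_three.mpr ⟨a, b, c, hab, hac, hbc, rfl⟩] at this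
  omega

end Cases

theorem stmt_12
    (hclaw : ¬ Nonempty (claw ↪g G)) (h1 : ¬ Nonempty (H1 ↪g G))
    (h2 : ¬ Nonempty (H2 ↪g G)) (hQ : IsMaxCliqueInNbhd G v Q) :
    (Case1 G v Q ∨ Case2 G v Q ∨ Case3 G v Q) ∧
      ¬ (Case1 G v Q ∧ Case2 G v Q) ∧ ¬ (Case1 G v Q ∧ Case3 G v Q) ∧
      ¬ (Case2 G v Q ∧ Case3 G v Q) :=
  ⟨case1_or_case2_or_case3 hclaw h1 h2 hQ, fun h => h.2.not_case1 h.1,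
    fun h => h.2.not_case1 h.1, fun h => h.2.not_case2 h.1⟩
end

section
/- The join of m ≥ 1 copies of C_5 contains no induced H1, where H1 is the path a-b-c-d-e with added chords ac and bd. -/
open SimpleGraph

/-- The join of `m` disjoint copies of the 5-cycle: vertices in different copies are
always adjacent, and vertices within a copy are adjacent as in `C₅`. -/
def joinC5 (m : ℕ) : SimpleGraph (Fin m × Fin 5) where
  Adj x y := x.1 ≠ y.1 ∨ (x.1 = y.1 ∧ (cycleGraph 5).Adj x.2 y.2)
  symm := by
    constructor
    intro x y h
    rcases h with h | ⟨h1, h2⟩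
    · exact Or.inl h.symm
    · exact Or.inr ⟨h1.symm, h2.symm⟩
  loopless := by
    constructor
    intro x h
    rcases h with h | ⟨_, h2⟩
    · exact h rfl
    · exact (cycleGraph 5).loopless.irrefl _ h2

/-! Pass to complements: an embedding `H1 ↪g G` is also an embedding `H1ᶜ ↪g Gᶜ`, so degrees
in `H1ᶜ` are bounded by degrees in `Gᶜ`. In the complement of the join, a vertex is adjacent only
to its non-neighbours inside its own copy of `C₅`, of which there are two; but the vertex `e` of
`H1` has three non-neighbours `a`, `b`, `c`. -/

lemma compl_cycleGraph_five_degree (v : Fin 5) : (cycleGraph 5)ᶜ.degree v = 2 := by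
  revert v; decide

lemma joinC5_compl_adj_iff {m : ℕ} {x y : Fin m × Fin 5} :
    (joinC5 m)ᶜ.Adj x y ↔ x.1 = y.1 ∧ (cycleGraph 5)ᶜ.Adj x.2 y.2 := by
  simp only [compl_adj, joinC5, ne_eq, Prod.ext_iff]
  tauto

open Classical in
lemma joinC5_compl_degree_le (m : ℕ) (x : Fin m × Fin 5) : (joinC5 m)ᶜ.degree x ≤ 2 := by
  rw [← compl_cycleGraph_five_degree x.2, ← card_neighborSet_eq_degree,
    ← card_neighborSet_eq_degree]
  refine Fintype.card_le_of_injective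
    (fun y => ⟨y.1.2, (joinC5_compl_adj_iff.1 y.2).2⟩) fun y z hyz => ?_
  have hy := (joinC5_compl_adj_iff.1 y.2).1
  have hz := (joinC5_compl_adj_iff.1 z.2).1
  exact Subtype.ext (Prod.ext (hy.symm.trans hz) (congrArg Subtype.val hyz))

open Classical in
lemma H1_compl_degree_four : H1ᶜ.degree 4 = 3 := by
  have hneighbors : H1ᶜ.neighborFinset 4 = {0, 1, 2} := by
    ext v; fin_cases v <;> rw [mem_neighborFinset] <;> simp [H1]
  rw [← card_neighborFinset_eq_degree, hneighbors]; rfl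

theorem stmt_16_general (m : ℕ) : ¬ Nonempty (H1 ↪g joinC5 m) := by
  classical
  rintro ⟨f⟩
  have h := ((Embedding.complEquiv f).toCopy.degree_le 4).trans (joinC5_compl_degree_le m (f 4))
  rw [H1_compl_degree_four] at h
  omega

theorem stmt_16 (m : ℕ) (hm : 1 ≤ m) : ¬ Nonempty (H1 ↪g joinC5 m) :=
  stmt_16_general m
end
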